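/- arXiv:2103.02593 — 5 statements merged into one kernel-verified Lean document; each statement's English description precedes it below -/
import Mathlib

section
/- Let U be an invertible bounded linear operator on H, K a bounded linear operator on H, and suppose the family Γ = {(U W_j, Λ_j P_{W_j} U*, v_j)}_{j∈J} is a K-g-fusion frame for H with bounds A, B, i.e. A‖K* f‖² ≤ ∑_{j∈J} v_j² ‖Λ_j P_{W_j} U* P_{U W_j} f‖² ≤ B‖f‖² for all f ∈ H. Then Λ = {(W_j, Λ_j, v_j)}_{j∈J} is a U⁻¹ K U-g-fusion frame for H with bounds A/‖U‖² and B‖U⁻¹‖²; that is, for all f ∈ H, (A/‖U‖²)·‖(U⁻¹ K U)* f‖² ≤ ∑_{j∈J} v_j² ‖Λ_j P_{W_j} f‖² ≤ B‖U⁻¹‖²·‖f‖². -/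
noncomputable section

open ContinuousLinearMap

/-- Orthogonal projection onto a closed subspace, as an endomorphism of `H`. -/
noncomputable def gProj {H : Type*} [NormedAddCommGroup H] [InnerProductSpace ℂ H]
    (W : Submodule ℂ H) [CompleteSpace W] : H →L[ℂ] H :=
  W.subtypeL.comp (W.orthogonalProjectionOnto)

lemma gProj_adjoint_gProj_map {H : Type*} [NormedAddCommGroup H] [InnerProductSpace ℂ H]
    [CompleteSpace H] (W : Submodule ℂ H) [CompleteSpace W] (U : H ≃L[ℂ] H)
    [CompleteSpace (W.map ((U : H →L[ℂ] H) : H →ₗ[ℂ] H))] (g : H) :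
    gProj W (adjoint (U : H →L[ℂ] H) (gProj (W.map ((U : H →L[ℂ] H) : H →ₗ[ℂ] H)) g))
      = gProj W (adjoint (U : H →L[ℂ] H) g) := by
  set S := W.map ((U : H →L[ℂ] H) : H →ₗ[ℂ] H)
  have hd : g - gProj S g ∈ Sᗮ := Submodule.sub_starProjection_mem_orthogonal g
  have hmem : adjoint (U : H →L[ℂ] H) (g - gProj S g) ∈ Wᗮ := by
    rw [Submodule.mem_orthogonal]
    intro w hw
    rw [adjoint_inner_right]
    exact hd (U w) ⟨w, hw, rfl⟩
  have h0 : gProj W (adjoint (U : H →L[ℂ] H) (g - gProj S g)) = 0 := by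
    have h := Submodule.orthogonalProjectionOnto_apply_of_mem_orthogonal hmem
    calc gProj W (adjoint (U : H →L[ℂ] H) (g - gProj S g))
        = W.subtypeL ((W.orthogonalProjectionOnto) (adjoint (U : H →L[ℂ] H) (g - gProj S g))) := rfl
      _ = 0 := by rw [h]; simp
  have h1 := map_sub (gProj W) (adjoint (U : H →L[ℂ] H) g)
      (adjoint (U : H →L[ℂ] H) (gProj S g))
  rw [← map_sub (adjoint (U : H →L[ℂ] H)), h0] at h1
  exact (sub_eq_zero.mp h1.symm).symm

/-- If `Γ = {(U W j, Λ j P_{W j} U*, v j)}` is a `K`-g-fusion frame with bounds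
`A, B`, then `Λ = {(W j, Λ j, v j)}` is a `U⁻¹ K U`-g-fusion frame with bounds `A/‖U‖²`
and `B‖U⁻¹‖²`. -/
theorem kgFusion_of_mapped_frame
    {H : Type*} [NormedAddCommGroup H] [InnerProductSpace ℂ H] [CompleteSpace H]
    {J : Type*} [Countable J]
    {G : J → Type*} [∀ j, NormedAddCommGroup (G j)] [∀ j, InnerProductSpace ℂ (G j)]
    [∀ j, CompleteSpace (G j)]
    (W : J → Submodule ℂ H) [∀ j, CompleteSpace (W j)]
    (v : J → ℝ) (hv : ∀ j, 0 < v j)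
    (Λ : ∀ j, H →L[ℂ] G j)
    (K : H →L[ℂ] H) (U : H ≃L[ℂ] H)
    [∀ j, CompleteSpace ((W j).map ((U : H →L[ℂ] H) : H →ₗ[ℂ] H))]
    (A B : ℝ) (hA : 0 < A) (hAB : A ≤ B)
    (hSummable : ∀ f : H, Summable fun j => (v j) ^ 2 *
      ‖Λ j (gProj (W j) (adjoint (U : H →L[ℂ] H)
        (gProj ((W j).map ((U : H →L[ℂ] H) : H →ₗ[ℂ] H)) f)))‖ ^ 2)
    (hlower : ∀ f : H,
      A * ‖adjoint K f‖ ^ 2 ≤ ∑' j, (v j) ^ 2 *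
        ‖Λ j (gProj (W j) (adjoint (U : H →L[ℂ] H)
          (gProj ((W j).map ((U : H →L[ℂ] H) : H →ₗ[ℂ] H)) f)))‖ ^ 2)
    (hupper : ∀ f : H,
      (∑' j, (v j) ^ 2 *
        ‖Λ j (gProj (W j) (adjoint (U : H →L[ℂ] H)
          (gProj ((W j).map ((U : H →L[ℂ] H) : H →ₗ[ℂ] H)) f)))‖ ^ 2) ≤ B * ‖f‖ ^ 2) :
    ∀ f : H,
      Summable (fun j => (v j) ^ 2 * ‖Λ j (gProj (W j) f)‖ ^ 2) ∧
      (A / ‖(U : H →L[ℂ] H)‖ ^ 2) *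
        ‖adjoint ((U.symm : H →L[ℂ] H) ∘L K ∘L (U : H →L[ℂ] H)) f‖ ^ 2 ≤
        ∑' j, (v j) ^ 2 * ‖Λ j (gProj (W j) f)‖ ^ 2 ∧
      (∑' j, (v j) ^ 2 * ‖Λ j (gProj (W j) f)‖ ^ 2) ≤
        B * ‖(U.symm : H →L[ℂ] H)‖ ^ 2 * ‖f‖ ^ 2 := by
  intro f
  set g : H := adjoint (U.symm : H →L[ℂ] H) f with hg
  have hcomp : ((U.symm : H →L[ℂ] H) ∘L (U : H →L[ℂ] H)) = ContinuousLinearMap.id ℂ H := by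
    ext x; simp
  have hUg : adjoint (U : H →L[ℂ] H) g = f := by
    rw [hg]
    calc adjoint (U : H →L[ℂ] H) (adjoint (U.symm : H →L[ℂ] H) f)
        = adjoint ((U.symm : H →L[ℂ] H) ∘L (U : H →L[ℂ] H)) f := by
          rw [adjoint_comp]; rfl
      _ = f := by rw [hcomp, adjoint_id]; rfl
  have heq : ∀ j, (v j) ^ 2 *
      ‖Λ j (gProj (W j) (adjoint (U : H →L[ℂ] H)
        (gProj ((W j).map ((U : H →L[ℂ] H) : H →ₗ[ℂ] H)) g)))‖ ^ 2
      = (v j) ^ 2 * ‖Λ j (gProj (W j) f)‖ ^ 2 := by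
    intro j
    rw [gProj_adjoint_gProj_map (W j) U g, hUg]
  have hsum : Summable (fun j => (v j) ^ 2 * ‖Λ j (gProj (W j) f)‖ ^ 2) :=
    (hSummable g).congr heq
  have htsum : (∑' j, (v j) ^ 2 *
      ‖Λ j (gProj (W j) (adjoint (U : H →L[ℂ] H)
        (gProj ((W j).map ((U : H →L[ℂ] H) : H →ₗ[ℂ] H)) g)))‖ ^ 2)
      = ∑' j, (v j) ^ 2 * ‖Λ j (gProj (W j) f)‖ ^ 2 := tsum_congr heq
  refine ⟨hsum, ?_, ?_⟩
  · -- lower bound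
    have hl := hlower g
    rw [htsum] at hl
    have hadj : adjoint ((U.symm : H →L[ℂ] H) ∘L K ∘L (U : H →L[ℂ] H)) f
        = adjoint (U : H →L[ℂ] H) (adjoint K g) := by
      simp [adjoint_comp, hg]
    have hbound : ‖adjoint ((U.symm : H →L[ℂ] H) ∘L K ∘L (U : H →L[ℂ] H)) f‖
        ≤ ‖(U : H →L[ℂ] H)‖ * ‖adjoint K g‖ := by
      rw [hadj]
      calc ‖adjoint (U : H →L[ℂ] H) (adjoint K g)‖
          ≤ ‖adjoint (U : H →L[ℂ] H)‖ * ‖adjoint K g‖ := le_opNorm _ _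
        _ = ‖(U : H →L[ℂ] H)‖ * ‖adjoint K g‖ := by
            rw [LinearIsometryEquiv.norm_map ContinuousLinearMap.adjoint]
    refine le_trans ?_ hl
    rcases eq_or_lt_of_le (norm_nonneg ((U : H →L[ℂ] H))) with h0 | h0
    · have hz : ‖adjoint ((U.symm : H →L[ℂ] H) ∘L K ∘L (U : H →L[ℂ] H)) f‖ = 0 := by
        have := hbound
        rw [← h0, zero_mul] at this
        exact le_antisymm this (norm_nonneg _)
      rw [hz, show (0:ℝ) ^ 2 = 0 by norm_num, mul_zero]
      positivity
    · have hsq : ‖adjoint ((U.symm : H →L[ℂ] H) ∘L K ∘L (U : H →L[ℂ] H)) f‖ ^ 2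
          ≤ ‖(U : H →L[ℂ] H)‖ ^ 2 * ‖adjoint K g‖ ^ 2 := by
        rw [← mul_pow]
        exact pow_le_pow_left₀ (norm_nonneg _) hbound 2
      calc (A / ‖(U : H →L[ℂ] H)‖ ^ 2) *
            ‖adjoint ((U.symm : H →L[ℂ] H) ∘L K ∘L (U : H →L[ℂ] H)) f‖ ^ 2
          ≤ (A / ‖(U : H →L[ℂ] H)‖ ^ 2) * (‖(U : H →L[ℂ] H)‖ ^ 2 * ‖adjoint K g‖ ^ 2) := by
            apply mul_le_mul_of_nonneg_left hsq
            positivity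
        _ = A * ‖adjoint K g‖ ^ 2 := by
            field_simp
  · -- upper bound
    have hu := hupper g
    rw [htsum] at hu
    have hgle : ‖g‖ ≤ ‖(U.symm : H →L[ℂ] H)‖ * ‖f‖ := by
      rw [hg]
      calc ‖adjoint (U.symm : H →L[ℂ] H) f‖
          ≤ ‖adjoint (U.symm : H →L[ℂ] H)‖ * ‖f‖ := le_opNorm _ _
        _ = ‖(U.symm : H →L[ℂ] H)‖ * ‖f‖ := by
            rw [LinearIsometryEquiv.norm_map ContinuousLinearMap.adjoint]
    have hgsq : ‖g‖ ^ 2 ≤ ‖(U.symm : H →L[ℂ] H)‖ ^ 2 * ‖f‖ ^ 2 := by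
      rw [← mul_pow]
      exact pow_le_pow_left₀ (norm_nonneg _) hgle 2
    calc (∑' j, (v j) ^ 2 * ‖Λ j (gProj (W j) f)‖ ^ 2) ≤ B * ‖g‖ ^ 2 := hu
      _ ≤ B * (‖(U.symm : H →L[ℂ] H)‖ ^ 2 * ‖f‖ ^ 2) := by
          apply mul_le_mul_of_nonneg_left hgsq (le_of_lt (lt_of_lt_of_le hA hAB))
      _ = B * ‖(U.symm : H →L[ℂ] H)‖ ^ 2 * ‖f‖ ^ 2 := by ring
end
end

section
/- Let K be a bounded linear operator on H and Λ = {(W_j, Λ_j, v_j)}_{j∈J} a K-g-fusion frame for H with bounds A, B. For each j ∈ J let T_j be an invertible bounded operator on H_j, and suppose 0 < m := inf_{j∈J} 1/‖T_j⁻¹‖ and M := sup_{j∈J} ‖T_j‖ < ∞. If T is an invertible bounded operator on H with K T = T K, then Γ = {(T W_j, T_j Λ_j P_{W_j} T*, v_j)}_{j∈J} is a K-g-fusion frame for H with bounds m²A‖T⁻¹‖⁻² and M²B‖T‖²; that is, for all f ∈ H, m²A‖T⁻¹‖⁻²·‖K* f‖² ≤ ∑_{j∈J} v_j² ‖T_j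 Λ_j P_{W_j} T* P_{T W_j} f‖² ≤ M²B‖T‖²·‖f‖². -/
noncomputable section

open ContinuousLinearMap

lemma gProj_key {H : Type*} [NormedAddCommGroup H] [InnerProductSpace ℂ H] [CompleteSpace H]
    (W : Submodule ℂ H) [CompleteSpace W] (T : H ≃L[ℂ] H)
    [CompleteSpace (W.map ((T : H →L[ℂ] H) : H →ₗ[ℂ] H))] (f : H) :
    gProj W (adjoint (T : H →L[ℂ] H) (gProj (W.map ((T : H →L[ℂ] H) : H →ₗ[ℂ] H)) f)) =
      gProj W (adjoint (T : H →L[ℂ] H) f) := by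
  set W' := W.map ((T : H →L[ℂ] H) : H →ₗ[ℂ] H)
  have hmem : f - gProj W' f ∈ W'ᗮ := Submodule.sub_starProjection_mem_orthogonal (K := W') f
  have hmem2 : adjoint (T : H →L[ℂ] H) (f - gProj W' f) ∈ Wᗮ := by
    rw [Submodule.mem_orthogonal]
    intro u hu
    rw [adjoint_inner_right]
    exact hmem (T u) ⟨u, hu, rfl⟩
  have h0 : W.orthogonalProjectionOnto (adjoint (T : H →L[ℂ] H) (f - gProj W' f)) = 0 :=
    Submodule.orthogonalProjectionOnto_apply_of_mem_orthogonal hmem2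
  have hsub := map_sub (W.orthogonalProjectionOnto) (adjoint (T : H →L[ℂ] H) f)
      (adjoint (T : H →L[ℂ] H) (gProj W' f))
  rw [← map_sub (adjoint (T : H →L[ℂ] H)), h0] at hsub
  have h1 : W.orthogonalProjectionOnto (adjoint (T : H →L[ℂ] H) (gProj W' f))
      = W.orthogonalProjectionOnto (adjoint (T : H →L[ℂ] H) f) :=
    sub_eq_zero.mp hsub.symm |>.symm
  exact congrArg W.subtypeL h1

set_option maxHeartbeats 1000000 in
/-- If `Λ` is a `K`-g-fusion frame with bounds `A, B`, the `T j` are invertible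
with `0 < m = inf 1/‖(T j)⁻¹‖`, `M = sup ‖T j‖ < ∞`, and `T` is invertible with `K T = T K`,
then `Γ = {(T W j, T j Λ j P_{W j} T*, v j)}` is a `K`-g-fusion frame with bounds
`m²A‖T⁻¹‖⁻²` and `M²B‖T‖²`. -/
theorem kgFusion_compose_invertibles
    {H : Type*} [NormedAddCommGroup H] [InnerProductSpace ℂ H] [CompleteSpace H]
    {J : Type*} [Countable J]
    {G : J → Type*} [∀ j, NormedAddCommGroup (G j)] [∀ j, InnerProductSpace ℂ (G j)]
    [∀ j, CompleteSpace (G j)]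
    (W : J → Submodule ℂ H) [∀ j, CompleteSpace (W j)]
    (v : J → ℝ) (hv : ∀ j, 0 < v j)
    (Λ : ∀ j, H →L[ℂ] G j)
    (K : H →L[ℂ] H) (T : H ≃L[ℂ] H) (Tj : ∀ j, G j ≃L[ℂ] G j)
    [∀ j, CompleteSpace ((W j).map ((T : H →L[ℂ] H) : H →ₗ[ℂ] H))]
    (m M : ℝ)
    (hm_def : m = ⨅ j, 1 / ‖((Tj j).symm : G j →L[ℂ] G j)‖)
    (hM_def : M = ⨆ j, ‖(Tj j : G j →L[ℂ] G j)‖)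
    (hm : 0 < m)
    (hM : BddAbove (Set.range fun j => ‖(Tj j : G j →L[ℂ] G j)‖))
    (hcomm : K ∘L (T : H →L[ℂ] H) = (T : H →L[ℂ] H) ∘L K)
    (A B : ℝ) (hA : 0 < A) (hAB : A ≤ B)
    (hSummable : ∀ f : H, Summable fun j => (v j) ^ 2 * ‖Λ j (gProj (W j) f)‖ ^ 2)
    (hlower : ∀ f : H,
      A * ‖adjoint K f‖ ^ 2 ≤ ∑' j, (v j) ^ 2 * ‖Λ j (gProj (W j) f)‖ ^ 2)
    (hupper : ∀ f : H,
      (∑' j, (v j) ^ 2 * ‖Λ j (gProj (W j) f)‖ ^ 2) ≤ B * ‖f‖ ^ 2) :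
    ∀ f : H,
      Summable (fun j => (v j) ^ 2 *
        ‖Tj j (Λ j (gProj (W j) (adjoint (T : H →L[ℂ] H)
          (gProj ((W j).map ((T : H →L[ℂ] H) : H →ₗ[ℂ] H)) f))))‖ ^ 2) ∧
      m ^ 2 * A * (‖(T.symm : H →L[ℂ] H)‖ ^ 2)⁻¹ * ‖adjoint K f‖ ^ 2 ≤
        ∑' j, (v j) ^ 2 *
          ‖Tj j (Λ j (gProj (W j) (adjoint (T : H →L[ℂ] H)
            (gProj ((W j).map ((T : H →L[ℂ] H) : H →ₗ[ℂ] H)) f))))‖ ^ 2 ∧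
      (∑' j, (v j) ^ 2 *
          ‖Tj j (Λ j (gProj (W j) (adjoint (T : H →L[ℂ] H)
            (gProj ((W j).map ((T : H →L[ℂ] H) : H →ₗ[ℂ] H)) f))))‖ ^ 2) ≤
        M ^ 2 * B * ‖(T : H →L[ℂ] H)‖ ^ 2 * ‖f‖ ^ 2 := by
  -- J is nonempty since m > 0
  have hJ : Nonempty J := by
    by_contra h
    rw [not_nonempty_iff] at h
    rw [Real.iInf_of_isEmpty] at hm_def
    exact hm.ne' hm_def
  intro f
  set T' : H →L[ℂ] H := (T : H →L[ℂ] H) with hT'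
  set g : H := adjoint T' f with hg
  -- rewrite the terms via gProj_key
  have hkey : ∀ j, gProj (W j) (adjoint T' (gProj ((W j).map (T' : H →ₗ[ℂ] H)) f))
      = gProj (W j) g := fun j => gProj_key (W j) T f
  have hfun : (fun j => (v j) ^ 2 *
        ‖Tj j (Λ j (gProj (W j) (adjoint T' (gProj ((W j).map (T' : H →ₗ[ℂ] H)) f))))‖ ^ 2)
      = fun j => (v j) ^ 2 * ‖Tj j (Λ j (gProj (W j) g))‖ ^ 2 := by
    funext j; rw [hkey j]
  -- bounds on ‖Tj j‖
  have hM0 : 0 ≤ M := by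
    obtain ⟨j⟩ := hJ
    exact le_trans (norm_nonneg _) (hM_def ▸ le_ciSup hM j)
  have hTjM : ∀ j (x : G j), ‖Tj j x‖ ≤ M * ‖x‖ := fun j x =>
    le_trans ((Tj j : G j →L[ℂ] G j).le_opNorm x)
      (mul_le_mul_of_nonneg_right (hM_def ▸ le_ciSup hM j) (norm_nonneg x))
  have hTjm : ∀ j (x : G j), m * ‖x‖ ≤ ‖Tj j x‖ := by
    intro j x
    by_cases hx : ‖((Tj j).symm : G j →L[ℂ] G j)‖ = 0
    · have : x = 0 := by
        have := ((Tj j).symm : G j →L[ℂ] G j).le_opNorm (Tj j x)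
        simp only [hx, zero_mul] at this
        have h2 : (Tj j).symm (Tj j x) = 0 := norm_le_zero_iff.mp this
        simpa using h2
      simp [this]
    · have hpos : 0 < ‖((Tj j).symm : G j →L[ℂ] G j)‖ :=
        lt_of_le_of_ne (norm_nonneg _) (Ne.symm hx)
      have hmle : m ≤ 1 / ‖((Tj j).symm : G j →L[ℂ] G j)‖ := by
        rw [hm_def]
        exact ciInf_le ⟨0, by rintro r ⟨j', rfl⟩; positivity⟩ j
      have hxle : ‖x‖ ≤ ‖((Tj j).symm : G j →L[ℂ] G j)‖ * ‖Tj j x‖ := by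
        have := ((Tj j).symm : G j →L[ℂ] G j).le_opNorm (Tj j x)
        simpa using this
      calc m * ‖x‖ ≤ (1 / ‖((Tj j).symm : G j →L[ℂ] G j)‖) *
            (‖((Tj j).symm : G j →L[ℂ] G j)‖ * ‖Tj j x‖) :=
            mul_le_mul hmle hxle (norm_nonneg _) (by positivity)
        _ = ‖Tj j x‖ := by field_simp
  -- pointwise bounds on terms
  set u : J → ℝ := fun j => (v j) ^ 2 * ‖Λ j (gProj (W j) g)‖ ^ 2 with hu
  set t : J → ℝ := fun j => (v j) ^ 2 * ‖Tj j (Λ j (gProj (W j) g))‖ ^ 2 with ht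
  have hun : ∀ j, 0 ≤ u j := fun j => by positivity
  have htn : ∀ j, 0 ≤ t j := fun j => by positivity
  have hle1 : ∀ j, t j ≤ M ^ 2 * u j := by
    intro j
    have := hTjM j (Λ j (gProj (W j) g))
    have h2 : ‖Tj j (Λ j (gProj (W j) g))‖ ^ 2 ≤ (M * ‖Λ j (gProj (W j) g)‖) ^ 2 :=
      pow_le_pow_left₀ (norm_nonneg _) this 2
    calc t j ≤ (v j)^2 * (M * ‖Λ j (gProj (W j) g)‖)^2 := by
          exact mul_le_mul_of_nonneg_left h2 (by positivity)
      _ = M ^ 2 * u j := by ring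
  have hle2 : ∀ j, m ^ 2 * u j ≤ t j := by
    intro j
    have := hTjm j (Λ j (gProj (W j) g))
    have h2 : (m * ‖Λ j (gProj (W j) g)‖) ^ 2 ≤ ‖Tj j (Λ j (gProj (W j) g))‖ ^ 2 :=
      pow_le_pow_left₀ (by positivity) this 2
    calc m ^ 2 * u j = (v j)^2 * (m * ‖Λ j (gProj (W j) g)‖)^2 := by ring
      _ ≤ t j := mul_le_mul_of_nonneg_left h2 (by positivity)
  have hus : Summable u := hSummable g
  have hts : Summable t :=
    Summable.of_nonneg_of_le htn hle1 (by simpa using hus.mul_left (M ^ 2))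
  constructor
  · rw [hfun]; exact hts
  rw [hfun]
  constructor
  · -- lower bound
    -- m^2 * A * ‖T.symm‖⁻² * ‖K* f‖² ≤ m^2 * (A * ‖K* g‖²) ≤ m² ∑ u ≤ ∑ t
    have step1 : m ^ 2 * (A * ‖adjoint K g‖ ^ 2) ≤ ∑' j, t j := by
      calc m ^ 2 * (A * ‖adjoint K g‖ ^ 2) ≤ m ^ 2 * ∑' j, u j :=
            mul_le_mul_of_nonneg_left (hlower g) (by positivity)
        _ = ∑' j, m ^ 2 * u j := (hus.tsum_mul_left _).symm
        _ ≤ ∑' j, t j := (hus.mul_left _).tsum_le_tsum hle2 hts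
    -- ‖K* f‖² ≤ ‖T.symm‖² ‖K* g‖²
    have hadj : adjoint T' (adjoint K f) = adjoint K g := by
      rw [hg, ← comp_apply, ← comp_apply, ← adjoint_comp, ← adjoint_comp, hcomm]
    have hKf : ‖adjoint K f‖ ≤ ‖(T.symm : H →L[ℂ] H)‖ * ‖adjoint K g‖ := by
      have hid : adjoint ((T.symm : H →L[ℂ] H)) (adjoint K g) = adjoint K f := by
        rw [← hadj, ← comp_apply, ← adjoint_comp]
        have : T' ∘L (T.symm : H →L[ℂ] H) = ContinuousLinearMap.id ℂ H := by
          ext x; simp [hT']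
        rw [this, adjoint_id, ContinuousLinearMap.id_apply]
      calc ‖adjoint K f‖ = ‖adjoint ((T.symm : H →L[ℂ] H)) (adjoint K g)‖ := by rw [hid]
        _ ≤ ‖adjoint ((T.symm : H →L[ℂ] H))‖ * ‖adjoint K g‖ := le_opNorm _ _
        _ = ‖(T.symm : H →L[ℂ] H)‖ * ‖adjoint K g‖ := by rw [adjoint.norm_map]
    by_cases hTs : ‖(T.symm : H →L[ℂ] H)‖ = 0
    · have : ‖adjoint K f‖ = 0 := le_antisymm (by simpa [hTs] using hKf) (norm_nonneg _)
      rw [this]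
      simpa using tsum_nonneg htn
    · have hTs0 : 0 < ‖(T.symm : H →L[ℂ] H)‖ := lt_of_le_of_ne (norm_nonneg _) (Ne.symm hTs)
      have h2 : ‖adjoint K f‖ ^ 2 ≤ ‖(T.symm : H →L[ℂ] H)‖ ^ 2 * ‖adjoint K g‖ ^ 2 := by
        calc ‖adjoint K f‖ ^ 2 ≤ (‖(T.symm : H →L[ℂ] H)‖ * ‖adjoint K g‖) ^ 2 :=
              pow_le_pow_left₀ (norm_nonneg _) hKf 2
          _ = _ := by ring
      calc m ^ 2 * A * (‖(T.symm : H →L[ℂ] H)‖ ^ 2)⁻¹ * ‖adjoint K f‖ ^ 2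
          ≤ m ^ 2 * A * (‖(T.symm : H →L[ℂ] H)‖ ^ 2)⁻¹ *
            (‖(T.symm : H →L[ℂ] H)‖ ^ 2 * ‖adjoint K g‖ ^ 2) :=
            mul_le_mul_of_nonneg_left h2 (by positivity)
        _ = m ^ 2 * (A * ‖adjoint K g‖ ^ 2) := by field_simp
        _ ≤ ∑' j, t j := step1
  · -- upper bound
    have hgn : ‖g‖ ≤ ‖T'‖ * ‖f‖ := by
      calc ‖g‖ ≤ ‖adjoint T'‖ * ‖f‖ := le_opNorm _ _
        _ = ‖T'‖ * ‖f‖ := by rw [adjoint.norm_map]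
    calc (∑' j, t j) ≤ ∑' j, M ^ 2 * u j := hts.tsum_le_tsum hle1 (hus.mul_left _)
      _ = M ^ 2 * ∑' j, u j := hus.tsum_mul_left _
      _ ≤ M ^ 2 * (B * ‖g‖ ^ 2) := mul_le_mul_of_nonneg_left (hupper g) (by positivity)
      _ ≤ M ^ 2 * (B * (‖T'‖ * ‖f‖) ^ 2) := by
          have := pow_le_pow_left₀ (norm_nonneg g) hgn 2
          have hB0 : (0:ℝ) < B := lt_of_lt_of_le hA hAB
          nlinarith [sq_nonneg M, mul_le_mul_of_nonneg_left this (le_of_lt hB0)]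
      _ = M ^ 2 * B * ‖T'‖ ^ 2 * ‖f‖ ^ 2 := by ring
end
end

section
/- Let Λ = {(W_j, Λ_j, v_j)}_{j∈J} and Γ = {(V_j, Γ_j, v_j)}_{j∈J} be g-fusion frames for H with bounds (A₁, B₁) and (A₂, B₂) respectively, and g-fusion frame operators S_Λ, S_Γ. If there exists D > 0 such that ∑_{j∈J} v_j² ‖(Λ_j P_{W_j} − Γ_j P_{V_j}) f‖² ≤ D‖f‖² for all f ∈ H, then ‖S_Λ − S_Γ‖ ≤ √D (√B₁ + √B₂), and consequently ‖S_Λ⁻¹ − S_Γ⁻¹‖ ≤ (√D / (A₁ A₂)) (√B₁ + √B₂). -/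
noncomputable section

open ContinuousLinearMap

open scoped ComplexInnerProductSpace

/-- Cauchy–Schwarz for tsums of nonnegative reals. -/
private lemma tsum_cs {J : Type*} (a b : J → ℝ) (ha : ∀ j, 0 ≤ a j) (hb : ∀ j, 0 ≤ b j)
    (ha2 : Summable fun j => a j ^ 2) (hb2 : Summable fun j => b j ^ 2) :
    ∑' j, a j * b j ≤ Real.sqrt (∑' j, a j ^ 2) * Real.sqrt (∑' j, b j ^ 2) := by
  have hab : Summable fun j => a j * b j := by
    refine (ha2.add hb2).of_nonneg_of_le (fun j => mul_nonneg (ha j) (hb j)) (fun j => ?_)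
    nlinarith [sq_nonneg (a j - b j)]
  refine Summable.tsum_le_of_sum_le hab (fun s => ?_)
  have h1 : (∑ j ∈ s, a j * b j) ^ 2 ≤ (∑ j ∈ s, a j ^ 2) * ∑ j ∈ s, b j ^ 2 :=
    Finset.sum_mul_sq_le_sq_mul_sq s a b
  have h2 : ∑ j ∈ s, a j ^ 2 ≤ ∑' j, a j ^ 2 := Summable.sum_le_tsum s (fun j _ => sq_nonneg _) ha2
  have h3 : ∑ j ∈ s, b j ^ 2 ≤ ∑' j, b j ^ 2 := Summable.sum_le_tsum s (fun j _ => sq_nonneg _) hb2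
  have hs : 0 ≤ ∑ j ∈ s, a j * b j := Finset.sum_nonneg fun j _ => mul_nonneg (ha j) (hb j)
  calc ∑ j ∈ s, a j * b j
      ≤ Real.sqrt ((∑ j ∈ s, a j ^ 2) * ∑ j ∈ s, b j ^ 2) := by
        rw [Real.le_sqrt hs (by positivity)]; exact h1
    _ = Real.sqrt (∑ j ∈ s, a j ^ 2) * Real.sqrt (∑ j ∈ s, b j ^ 2) :=
        Real.sqrt_mul (Finset.sum_nonneg fun j _ => sq_nonneg _) _
    _ ≤ _ := mul_le_mul (Real.sqrt_le_sqrt h2) (Real.sqrt_le_sqrt h3)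
        (Real.sqrt_nonneg _) (Real.sqrt_nonneg _)

/-- The key pointwise inner-product identity for the frame operator terms. -/
private lemma inner_term_eq {H : Type*} [NormedAddCommGroup H] [InnerProductSpace ℂ H]
    [CompleteSpace H] {G : Type*} [NormedAddCommGroup G] [InnerProductSpace ℂ G]
    [CompleteSpace G] (W : Submodule ℂ H) [CompleteSpace W]
    (T : H →L[ℂ] G) (r : ℝ) (f g : H) :
    ⟪g, r • gProj W (adjoint T (T (gProj W f)))⟫
      = r • ⟪T (gProj W g), T (gProj W f)⟫ := by
  rw [RCLike.real_smul_eq_coe_smul (K := ℂ), inner_smul_real_right]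
  congr 1
  show ⟪g, gProj W (adjoint T (T (gProj W f)))⟫ = _
  have h1 : ∀ x : H, gProj W x = W.starProjection x := fun x => rfl
  rw [h1, ← Submodule.inner_starProjection_left_eq_right, ← h1,
    ContinuousLinearMap.adjoint_inner_right]

/-- If `∑ j, v j ² ‖(Λ j P_{W j} − Γ j P_{V j}) f‖² ≤ D ‖f‖²`, then
`‖S_Λ − S_Γ‖ ≤ √D (√B₁ + √B₂)` and `‖S_Λ⁻¹ − S_Γ⁻¹‖ ≤ (√D/(A₁A₂)) (√B₁ + √B₂)`. -/
theorem frameOp_perturbation_bound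
    {H : Type*} [NormedAddCommGroup H] [InnerProductSpace ℂ H] [CompleteSpace H]
    {J : Type*} [Countable J]
    {G : J → Type*} [∀ j, NormedAddCommGroup (G j)] [∀ j, InnerProductSpace ℂ (G j)]
    [∀ j, CompleteSpace (G j)]
    (W V : J → Submodule ℂ H) [∀ j, CompleteSpace (W j)] [∀ j, CompleteSpace (V j)]
    (v : J → ℝ) (hv : ∀ j, 0 < v j)
    (Λ Γ : ∀ j, H →L[ℂ] G j)
    (A₁ B₁ A₂ B₂ : ℝ) (hA₁ : 0 < A₁) (hAB₁ : A₁ ≤ B₁) (hA₂ : 0 < A₂) (hAB₂ : A₂ ≤ B₂)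
    (hΛlow : ∀ f : H,
      A₁ * ‖f‖ ^ 2 ≤ ∑' j, (v j) ^ 2 * ‖Λ j (gProj (W j) f)‖ ^ 2)
    (hΛup : ∀ f : H,
      (∑' j, (v j) ^ 2 * ‖Λ j (gProj (W j) f)‖ ^ 2) ≤ B₁ * ‖f‖ ^ 2)
    (hΓlow : ∀ f : H,
      A₂ * ‖f‖ ^ 2 ≤ ∑' j, (v j) ^ 2 * ‖Γ j (gProj (V j) f)‖ ^ 2)
    (hΓup : ∀ f : H,
      (∑' j, (v j) ^ 2 * ‖Γ j (gProj (V j) f)‖ ^ 2) ≤ B₂ * ‖f‖ ^ 2)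
    (SΛ SΓ : H ≃L[ℂ] H)
    (hSΛ : ∀ f : H, HasSum
      (fun j => (v j) ^ 2 • gProj (W j) (adjoint (Λ j) (Λ j (gProj (W j) f)))) (SΛ f))
    (hSΓ : ∀ f : H, HasSum
      (fun j => (v j) ^ 2 • gProj (V j) (adjoint (Γ j) (Γ j (gProj (V j) f)))) (SΓ f))
    (D : ℝ) (hD : 0 < D)
    (hpert : ∀ f : H,
      (∑' j, (v j) ^ 2 * ‖Λ j (gProj (W j) f) - Γ j (gProj (V j) f)‖ ^ 2) ≤ D * ‖f‖ ^ 2)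
    (hpertsum : ∀ f : H,
      Summable fun j => (v j) ^ 2 * ‖Λ j (gProj (W j) f) - Γ j (gProj (V j) f)‖ ^ 2) :
    ‖(SΛ : H →L[ℂ] H) - (SΓ : H →L[ℂ] H)‖ ≤ Real.sqrt D * (Real.sqrt B₁ + Real.sqrt B₂) ∧
    ‖(SΛ.symm : H →L[ℂ] H) - (SΓ.symm : H →L[ℂ] H)‖ ≤
      (Real.sqrt D / (A₁ * A₂)) * (Real.sqrt B₁ + Real.sqrt B₂) := by
  set C := Real.sqrt D * (Real.sqrt B₁ + Real.sqrt B₂) with hC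
  have hCnn : 0 ≤ C := by positivity
  -- summability of the frame series
  have sumΛ : ∀ f : H, Summable fun j => (v j) ^ 2 * ‖Λ j (gProj (W j) f)‖ ^ 2 := by
    intro f
    rcases eq_or_ne f 0 with rfl | hf
    · simpa [map_zero] using summable_zero
    · by_contra h
      have h0 := hΛlow f
      rw [tsum_eq_zero_of_not_summable h] at h0
      have : 0 < ‖f‖ := norm_pos_iff.mpr hf
      nlinarith [mul_pos hA₁ (pow_pos this 2), mul_pos hA₂ (pow_pos this 2)]
  have sumΓ : ∀ f : H, Summable fun j => (v j) ^ 2 * ‖Γ j (gProj (V j) f)‖ ^ 2 := by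
    intro f
    rcases eq_or_ne f 0 with rfl | hf
    · simpa [map_zero] using summable_zero
    · by_contra h
      have h0 := hΓlow f
      rw [tsum_eq_zero_of_not_summable h] at h0
      have : 0 < ‖f‖ := norm_pos_iff.mpr hf
      nlinarith [mul_pos hA₁ (pow_pos this 2), mul_pos hA₂ (pow_pos this 2)]
  -- inner product expansion of the frame operators
  have hΛinner : ∀ f g : H, HasSum
      (fun j => (v j) ^ 2 • ⟪Λ j (gProj (W j) g), Λ j (gProj (W j) f)⟫)
      ⟪g, (SΛ f : H)⟫ := by
    intro f g
    have h := (innerSL ℂ g).hasSum (hSΛ f)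
    have he : (fun j => (innerSL ℂ g)
        ((v j) ^ 2 • gProj (W j) (adjoint (Λ j) (Λ j (gProj (W j) f)))))
        = fun j => (v j) ^ 2 • ⟪Λ j (gProj (W j) g), Λ j (gProj (W j) f)⟫ :=
      funext fun j => inner_term_eq (W j) (Λ j) ((v j) ^ 2) f g
    rwa [he] at h
  have hΓinner : ∀ f g : H, HasSum
      (fun j => (v j) ^ 2 • ⟪Γ j (gProj (V j) g), Γ j (gProj (V j) f)⟫)
      ⟪g, (SΓ f : H)⟫ := by
    intro f g
    have h := (innerSL ℂ g).hasSum (hSΓ f)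
    have he : (fun j => (innerSL ℂ g)
        ((v j) ^ 2 • gProj (V j) (adjoint (Γ j) (Γ j (gProj (V j) f)))))
        = fun j => (v j) ^ 2 • ⟪Γ j (gProj (V j) g), Γ j (gProj (V j) f)⟫ :=
      funext fun j => inner_term_eq (V j) (Γ j) ((v j) ^ 2) f g
    rwa [he] at h
  -- the key bilinear bound
  have key : ∀ f g : H, ‖⟪g, (SΛ f : H) - SΓ f⟫‖ ≤ C * ‖f‖ * ‖g‖ := by
    intro f g
    have hdiff : HasSum
        (fun j => (v j) ^ 2 • (⟪Λ j (gProj (W j) g), Λ j (gProj (W j) f)⟫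
          - ⟪Γ j (gProj (V j) g), Γ j (gProj (V j) f)⟫))
        (⟪g, (SΛ f : H)⟫ - ⟪g, (SΓ f : H)⟫) := by
      have := (hΛinner f g).sub (hΓinner f g)
      simpa [smul_sub] using this
    rw [inner_sub_right, ← hdiff.tsum_eq]
    -- norm bound per term
    have hterm : ∀ j, ‖(v j) ^ 2 • (⟪Λ j (gProj (W j) g), Λ j (gProj (W j) f)⟫
          - ⟪Γ j (gProj (V j) g), Γ j (gProj (V j) f)⟫)‖
        ≤ (v j * ‖Λ j (gProj (W j) g)‖) * (v j * ‖Λ j (gProj (W j) f) - Γ j (gProj (V j) f)‖)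
          + (v j * ‖Λ j (gProj (W j) g) - Γ j (gProj (V j) g)‖)
            * (v j * ‖Γ j (gProj (V j) f)‖) := by
      intro j
      have hdecomp : ⟪Λ j (gProj (W j) g), Λ j (gProj (W j) f)⟫
          - ⟪Γ j (gProj (V j) g), Γ j (gProj (V j) f)⟫
          = ⟪Λ j (gProj (W j) g), Λ j (gProj (W j) f) - Γ j (gProj (V j) f)⟫
            + ⟪Λ j (gProj (W j) g) - Γ j (gProj (V j) g), Γ j (gProj (V j) f)⟫ := by
        rw [inner_sub_right, inner_sub_left]; ring
      rw [norm_smul, hdecomp]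
      have h1 := norm_add_le
        (⟪Λ j (gProj (W j) g), Λ j (gProj (W j) f) - Γ j (gProj (V j) f)⟫)
        (⟪Λ j (gProj (W j) g) - Γ j (gProj (V j) g), Γ j (gProj (V j) f)⟫)
      have h2 := norm_inner_le_norm (𝕜 := ℂ)
        (Λ j (gProj (W j) g)) (Λ j (gProj (W j) f) - Γ j (gProj (V j) f))
      have h3 := norm_inner_le_norm (𝕜 := ℂ)
        (Λ j (gProj (W j) g) - Γ j (gProj (V j) g)) (Γ j (gProj (V j) f))
      have hv2 : ‖(v j) ^ 2‖ = v j * v j := by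
        rw [Real.norm_eq_abs, abs_of_nonneg (by positivity)]; ring
      rw [hv2]
      nlinarith [norm_nonneg (Λ j (gProj (W j) g)), (hv j).le,
        norm_nonneg (Γ j (gProj (V j) f)),
        norm_nonneg (Λ j (gProj (W j) f) - Γ j (gProj (V j) f)),
        norm_nonneg (Λ j (gProj (W j) g) - Γ j (gProj (V j) g))]
    -- summability of the two product families
    have sq1 : Summable fun j => (v j * ‖Λ j (gProj (W j) g)‖) ^ 2 := by
      have := sumΛ g; refine this.congr fun j => ?_; ring
    have sq2 : Summable fun j =>
        (v j * ‖Λ j (gProj (W j) f) - Γ j (gProj (V j) f)‖) ^ 2 := by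
      have := hpertsum f; refine this.congr fun j => ?_; ring
    have sq3 : Summable fun j =>
        (v j * ‖Λ j (gProj (W j) g) - Γ j (gProj (V j) g)‖) ^ 2 := by
      have := hpertsum g; refine this.congr fun j => ?_; ring
    have sq4 : Summable fun j => (v j * ‖Γ j (gProj (V j) f)‖) ^ 2 := by
      have := sumΓ f; refine this.congr fun j => ?_; ring
    have sp1 : Summable fun j => (v j * ‖Λ j (gProj (W j) g)‖)
        * (v j * ‖Λ j (gProj (W j) f) - Γ j (gProj (V j) f)‖) := by
      refine (sq1.add sq2).of_nonneg_of_le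
        (fun j => mul_nonneg (mul_nonneg (hv j).le (norm_nonneg _)) (mul_nonneg (hv j).le (norm_nonneg _))) (fun j => ?_)
      nlinarith [sq_nonneg ((v j * ‖Λ j (gProj (W j) g)‖)
        - (v j * ‖Λ j (gProj (W j) f) - Γ j (gProj (V j) f)‖))]
    have sp2 : Summable fun j => (v j * ‖Λ j (gProj (W j) g) - Γ j (gProj (V j) g)‖)
        * (v j * ‖Γ j (gProj (V j) f)‖) := by
      refine (sq3.add sq4).of_nonneg_of_le
        (fun j => mul_nonneg (mul_nonneg (hv j).le (norm_nonneg _)) (mul_nonneg (hv j).le (norm_nonneg _))) (fun j => ?_)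
      nlinarith [sq_nonneg ((v j * ‖Λ j (gProj (W j) g) - Γ j (gProj (V j) g)‖)
        - (v j * ‖Γ j (gProj (V j) f)‖))]
    have hnormsum : Summable fun j => ‖(v j) ^ 2
        • (⟪Λ j (gProj (W j) g), Λ j (gProj (W j) f)⟫
          - ⟪Γ j (gProj (V j) g), Γ j (gProj (V j) f)⟫)‖ :=
      (sp1.add sp2).of_nonneg_of_le (fun j => norm_nonneg _) hterm
    have hb1 : ∑' j, (v j * ‖Λ j (gProj (W j) g)‖)
        * (v j * ‖Λ j (gProj (W j) f) - Γ j (gProj (V j) f)‖)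
        ≤ Real.sqrt (B₁ * ‖g‖ ^ 2) * Real.sqrt (D * ‖f‖ ^ 2) := by
      refine le_trans (tsum_cs _ _ (fun j => mul_nonneg (hv j).le (norm_nonneg _)) (fun j => mul_nonneg (hv j).le (norm_nonneg _)) sq1 sq2) ?_
      refine mul_le_mul (Real.sqrt_le_sqrt ?_) (Real.sqrt_le_sqrt ?_)
        (Real.sqrt_nonneg _) (Real.sqrt_nonneg _)
      · refine le_trans (le_of_eq (tsum_congr fun j => by ring)) (hΛup g)
      · refine le_trans (le_of_eq (tsum_congr fun j => by ring)) (hpert f)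
    have hb2 : ∑' j, (v j * ‖Λ j (gProj (W j) g) - Γ j (gProj (V j) g)‖)
        * (v j * ‖Γ j (gProj (V j) f)‖)
        ≤ Real.sqrt (D * ‖g‖ ^ 2) * Real.sqrt (B₂ * ‖f‖ ^ 2) := by
      refine le_trans (tsum_cs _ _ (fun j => mul_nonneg (hv j).le (norm_nonneg _)) (fun j => mul_nonneg (hv j).le (norm_nonneg _)) sq3 sq4) ?_
      refine mul_le_mul (Real.sqrt_le_sqrt ?_) (Real.sqrt_le_sqrt ?_)
        (Real.sqrt_nonneg _) (Real.sqrt_nonneg _)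
      · refine le_trans (le_of_eq (tsum_congr fun j => by ring)) (hpert g)
      · refine le_trans (le_of_eq (tsum_congr fun j => by ring)) (hΓup f)
    calc ‖∑' j, (v j) ^ 2 • (⟪Λ j (gProj (W j) g), Λ j (gProj (W j) f)⟫
          - ⟪Γ j (gProj (V j) g), Γ j (gProj (V j) f)⟫)‖
        ≤ ∑' j, ‖(v j) ^ 2 • (⟪Λ j (gProj (W j) g), Λ j (gProj (W j) f)⟫
          - ⟪Γ j (gProj (V j) g), Γ j (gProj (V j) f)⟫)‖ :=
          norm_tsum_le_tsum_norm hnormsum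
      _ ≤ ∑' j, ((v j * ‖Λ j (gProj (W j) g)‖)
            * (v j * ‖Λ j (gProj (W j) f) - Γ j (gProj (V j) f)‖)
          + (v j * ‖Λ j (gProj (W j) g) - Γ j (gProj (V j) g)‖)
            * (v j * ‖Γ j (gProj (V j) f)‖)) :=
          Summable.tsum_le_tsum hterm hnormsum (sp1.add sp2)
      _ = (∑' j, (v j * ‖Λ j (gProj (W j) g)‖)
            * (v j * ‖Λ j (gProj (W j) f) - Γ j (gProj (V j) f)‖))
          + ∑' j, (v j * ‖Λ j (gProj (W j) g) - Γ j (gProj (V j) g)‖)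
            * (v j * ‖Γ j (gProj (V j) f)‖) := Summable.tsum_add sp1 sp2
      _ ≤ Real.sqrt (B₁ * ‖g‖ ^ 2) * Real.sqrt (D * ‖f‖ ^ 2)
          + Real.sqrt (D * ‖g‖ ^ 2) * Real.sqrt (B₂ * ‖f‖ ^ 2) := add_le_add hb1 hb2
      _ = C * ‖f‖ * ‖g‖ := by
          rw [Real.sqrt_mul (by linarith) (‖g‖ ^ 2), Real.sqrt_mul hD.le (‖f‖ ^ 2),
            Real.sqrt_mul hD.le (‖g‖ ^ 2), Real.sqrt_mul (by linarith) (‖f‖ ^ 2),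
            Real.sqrt_sq (norm_nonneg f), Real.sqrt_sq (norm_nonneg g), hC]
          ring
  -- first conclusion
  have main1 : ‖(SΛ : H →L[ℂ] H) - (SΓ : H →L[ℂ] H)‖ ≤ C := by
    refine opNorm_le_bound _ hCnn (fun f => ?_)
    set x := (SΛ f : H) - SΓ f with hx
    have hxx : ‖x‖ ^ 2 ≤ C * ‖f‖ * ‖x‖ := by
      have h := key f x
      have : ‖⟪x, x⟫‖ = ‖x‖ ^ 2 := by
        rw [inner_self_eq_norm_sq_to_K (𝕜 := ℂ)]
        push_cast
        simp [norm_pow]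
      rw [this] at h; exact h
    have hfin : ‖x‖ ≤ C * ‖f‖ := by
      rcases eq_or_lt_of_le (norm_nonneg x) with h0 | h0
      · rw [← h0]; positivity
      · nlinarith
    calc ‖((SΛ : H →L[ℂ] H) - (SΓ : H →L[ℂ] H)) f‖ = ‖x‖ := by
          simp [hx, sub_apply]
      _ ≤ C * ‖f‖ := hfin
  refine ⟨main1, ?_⟩
  -- lower bounds give norm bounds on inverses
  have hlow : ∀ (T : H ≃L[ℂ] H) (A : ℝ), 0 < A →
      (∀ g : H, A * ‖g‖ ^ 2 ≤ Complex.re ⟪g, (T g : H)⟫) →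
      ‖(T.symm : H →L[ℂ] H)‖ ≤ A⁻¹ := by
    intro T A hA hT
    refine opNorm_le_bound _ (by positivity) (fun f => ?_)
    have h1 : A * ‖T.symm f‖ ^ 2 ≤ Complex.re ⟪T.symm f, (T (T.symm f) : H)⟫ :=
      hT (T.symm f)
    rw [T.apply_symm_apply] at h1
    have h2 : Complex.re ⟪T.symm f, f⟫ ≤ ‖T.symm f‖ * ‖f‖ := by
      refine le_trans (Complex.re_le_norm _) ?_
      exact norm_inner_le_norm (𝕜 := ℂ) (T.symm f) f
    have h3 : A * ‖T.symm f‖ ^ 2 ≤ ‖T.symm f‖ * ‖f‖ := le_trans h1 h2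
    show ‖(T.symm : H →L[ℂ] H) f‖ ≤ A⁻¹ * ‖f‖
    rcases eq_or_lt_of_le (norm_nonneg (T.symm f)) with h0 | h0
    · rw [ContinuousLinearEquiv.coe_coe, ← h0]; positivity
    · rw [ContinuousLinearEquiv.coe_coe]
      rw [inv_mul_eq_div, le_div_iff₀ hA]
      nlinarith
  have hreΛ : ∀ g : H, A₁ * ‖g‖ ^ 2 ≤ Complex.re ⟪g, (SΛ g : H)⟫ := by
    intro g
    have h := (Complex.reCLM).hasSum (hΛinner g g)
    have he : (fun j => Complex.reCLM
        ((v j) ^ 2 • ⟪Λ j (gProj (W j) g), Λ j (gProj (W j) g)⟫))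
        = fun j => (v j) ^ 2 * ‖Λ j (gProj (W j) g)‖ ^ 2 := by
      funext j
      have : ⟪Λ j (gProj (W j) g), Λ j (gProj (W j) g)⟫
          = ((‖Λ j (gProj (W j) g)‖ : ℂ)) ^ 2 := inner_self_eq_norm_sq_to_K _
      rw [Complex.reCLM_apply, this, ← Complex.ofReal_pow, Complex.real_smul,
        ← Complex.ofReal_mul, Complex.ofReal_re]
    rw [he] at h
    have h2 := h.tsum_eq
    rw [Complex.reCLM_apply] at h2
    rw [← h2]
    exact hΛlow g
  have hreΓ : ∀ g : H, A₂ * ‖g‖ ^ 2 ≤ Complex.re ⟪g, (SΓ g : H)⟫ := by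
    intro g
    have h := (Complex.reCLM).hasSum (hΓinner g g)
    have he : (fun j => Complex.reCLM
        ((v j) ^ 2 • ⟪Γ j (gProj (V j) g), Γ j (gProj (V j) g)⟫))
        = fun j => (v j) ^ 2 * ‖Γ j (gProj (V j) g)‖ ^ 2 := by
      funext j
      have : ⟪Γ j (gProj (V j) g), Γ j (gProj (V j) g)⟫
          = ((‖Γ j (gProj (V j) g)‖ : ℂ)) ^ 2 := inner_self_eq_norm_sq_to_K _
      rw [Complex.reCLM_apply, this, ← Complex.ofReal_pow, Complex.real_smul,
        ← Complex.ofReal_mul, Complex.ofReal_re]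
    rw [he] at h
    have h2 := h.tsum_eq
    rw [Complex.reCLM_apply] at h2
    rw [← h2]
    exact hΓlow g
  have hinvΛ : ‖(SΛ.symm : H →L[ℂ] H)‖ ≤ A₁⁻¹ := hlow SΛ A₁ hA₁ hreΛ
  have hinvΓ : ‖(SΓ.symm : H →L[ℂ] H)‖ ≤ A₂⁻¹ := hlow SΓ A₂ hA₂ hreΓ
  have halg : (SΛ.symm : H →L[ℂ] H) - (SΓ.symm : H →L[ℂ] H)
      = (SΛ.symm : H →L[ℂ] H).comp
        (((SΓ : H →L[ℂ] H) - (SΛ : H →L[ℂ] H)).comp (SΓ.symm : H →L[ℂ] H)) := by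
    ext f
    simp only [sub_apply, comp_apply, ContinuousLinearEquiv.coe_coe, map_sub,
      SΓ.apply_symm_apply, SΛ.symm_apply_apply]
  rw [halg]
  calc ‖(SΛ.symm : H →L[ℂ] H).comp
        (((SΓ : H →L[ℂ] H) - (SΛ : H →L[ℂ] H)).comp (SΓ.symm : H →L[ℂ] H))‖
      ≤ ‖(SΛ.symm : H →L[ℂ] H)‖
        * (‖(SΓ : H →L[ℂ] H) - (SΛ : H →L[ℂ] H)‖ * ‖(SΓ.symm : H →L[ℂ] H)‖) :=
        le_trans (opNorm_comp_le _ _)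
          (mul_le_mul_of_nonneg_left (opNorm_comp_le _ _) (norm_nonneg _))
    _ ≤ A₁⁻¹ * (C * A₂⁻¹) := by
        have hrev : ‖(SΓ : H →L[ℂ] H) - (SΛ : H →L[ℂ] H)‖ ≤ C := by
          rw [norm_sub_rev]; exact main1
        have h1 : ‖(SΓ : H →L[ℂ] H) - (SΛ : H →L[ℂ] H)‖ * ‖(SΓ.symm : H →L[ℂ] H)‖
            ≤ C * A₂⁻¹ :=
          mul_le_mul hrev hinvΓ (norm_nonneg _) hCnn
        exact mul_le_mul hinvΛ h1 (by positivity) (by positivity)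
    _ = (Real.sqrt D / (A₁ * A₂)) * (Real.sqrt B₁ + Real.sqrt B₂) := by
        rw [hC]; field_simp
end
end

section
/- Let Λ = {(W_j, Λ_j, v_j)}_{j∈J} and Γ = {(V_j, Γ_j, v_j)}_{j∈J} be g-fusion frames for H with bounds (A₁, B₁) and (A₂, B₂) respectively, with g-fusion frame operators S_Λ, S_Γ. If there exists D > 0 such that |∑_{j∈J} v_j² ‖Λ_j P_{W_j} f‖² − ∑_{j∈J} v_j² ‖Γ_j P_{V_j} f‖²| ≤ D‖f‖² for all f ∈ H, then the canonical dual frames satisfy, for all f ∈ H, |∑_{j∈J} v_j² ‖Λ_j P_{W_j} S_Λ⁻¹ f‖² − ∑_{j∈J} v_j² ‖Γ_j P_{V_j} S_Γ⁻¹ f‖²| ≤ (D/(A₁ A₂))·‖f‖². -/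
noncomputable section

open ContinuousLinearMap
open scoped InnerProductSpace
set_option linter.unusedSectionVars false
set_option linter.unusedVariables false

section Helpers

variable {H : Type*} [NormedAddCommGroup H] [InnerProductSpace ℂ H] [CompleteSpace H]


lemma gProj_inner_left (W : Submodule ℂ H) [CompleteSpace W] (f g : H) :
    ⟪gProj W f, g⟫_ℂ = ⟪f, gProj W g⟫_ℂ :=
  W.inner_starProjection_left_eq_right f g

lemma term_inner {G : Type*} [NormedAddCommGroup G] [InnerProductSpace ℂ G] [CompleteSpace G]
    (W : Submodule ℂ H) [CompleteSpace W] (r : ℝ) (T : H →L[ℂ] G) (f g : H) :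
    ⟪g, r • gProj W (adjoint T (T (gProj W f)))⟫_ℂ
      = (r : ℂ) * ⟪T (gProj W g), T (gProj W f)⟫_ℂ := by
  rw [show r • gProj W (adjoint T (T (gProj W f))) = (r : ℂ) • gProj W (adjoint T (T (gProj W f)))
    from (Complex.coe_smul r _).symm, inner_smul_right, ← gProj_inner_left,
    adjoint_inner_right]

set_option linter.unusedSectionVars false

lemma hasSum_re_inner {J : Type*} {G : J → Type*} [∀ j, NormedAddCommGroup (G j)]
    [∀ j, InnerProductSpace ℂ (G j)] [∀ j, CompleteSpace (G j)]
    (W : J → Submodule ℂ H) [∀ j, CompleteSpace (W j)] (v : J → ℝ) (Λ : ∀ j, H →L[ℂ] G j)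
    (S : H ≃L[ℂ] H)
    (hS : ∀ f : H, HasSum
      (fun j => (v j) ^ 2 • gProj (W j) (adjoint (Λ j) (Λ j (gProj (W j) f)))) (S f))
    (f : H) :
    HasSum (fun j => (v j) ^ 2 * ‖Λ j (gProj (W j) f)‖ ^ 2) (⟪f, S f⟫_ℂ).re := by
  have h1 : HasSum (fun j => ⟪f, (v j) ^ 2 • gProj (W j) (adjoint (Λ j) (Λ j (gProj (W j) f)))⟫_ℂ)
      ⟪f, S f⟫_ℂ := (innerSL ℂ f).hasSum (hS f)
  have h2 := Complex.reCLM.hasSum h1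
  refine h2.congr_fun fun j => ?_
  rw [term_inner, inner_self_eq_norm_sq_to_K]
  simp [← Complex.ofReal_pow, ← Complex.ofReal_mul]

lemma inner_S_symm {J : Type*} {G : J → Type*} [∀ j, NormedAddCommGroup (G j)]
    [∀ j, InnerProductSpace ℂ (G j)] [∀ j, CompleteSpace (G j)]
    (W : J → Submodule ℂ H) [∀ j, CompleteSpace (W j)] (v : J → ℝ) (Λ : ∀ j, H →L[ℂ] G j)
    (S : H ≃L[ℂ] H)
    (hS : ∀ f : H, HasSum
      (fun j => (v j) ^ 2 • gProj (W j) (adjoint (Λ j) (Λ j (gProj (W j) f)))) (S f))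
    (f g : H) : ⟪S f, g⟫_ℂ = ⟪f, S g⟫_ℂ := by
  have h1 : HasSum (fun j => ⟪g, (v j) ^ 2 • gProj (W j) (adjoint (Λ j) (Λ j (gProj (W j) f)))⟫_ℂ)
      ⟪g, S f⟫_ℂ := (innerSL ℂ g).hasSum (hS f)
  have h2 : HasSum (fun j => ⟪f, (v j) ^ 2 • gProj (W j) (adjoint (Λ j) (Λ j (gProj (W j) g)))⟫_ℂ)
      ⟪f, S g⟫_ℂ := (innerSL ℂ f).hasSum (hS g)
  have h3 := h1.star
  rw [← inner_conj_symm (S f) g]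
  refine HasSum.unique h3 (h2.congr_fun fun j => ?_)
  rw [term_inner, term_inner]
  simp [mul_comm, inner_conj_symm, RCLike.star_def, map_mul]

lemma form_bound (T : H →L[ℂ] H)
    (hsymm : ∀ u w : H, (⟪u, T w⟫_ℂ).re = (⟪w, T u⟫_ℂ).re)
    (D : ℝ) (hD : 0 ≤ D)
    (h : ∀ f : H, |(⟪f, T f⟫_ℂ).re| ≤ D * ‖f‖ ^ 2) :
    ∀ u w : H, |(⟪u, T w⟫_ℂ).re| ≤ D * ‖u‖ * ‖w‖ := by
  have key : ∀ u w : H, |(⟪u, T w⟫_ℂ).re| ≤ D / 2 * (‖u‖ ^ 2 + ‖w‖ ^ 2) := by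
    intro u w
    have e1 : (⟪u + w, T (u + w)⟫_ℂ).re
        = (⟪u, T u⟫_ℂ).re + (⟪u, T w⟫_ℂ).re + (⟪w, T u⟫_ℂ).re + (⟪w, T w⟫_ℂ).re := by
      simp [map_add, inner_add_left, inner_add_right, Complex.add_re]; ring
    have e2 : (⟪u - w, T (u - w)⟫_ℂ).re
        = (⟪u, T u⟫_ℂ).re - (⟪u, T w⟫_ℂ).re - (⟪w, T u⟫_ℂ).re + (⟪w, T w⟫_ℂ).re := by
      simp [map_sub, inner_sub_left, inner_sub_right, Complex.sub_re]; ring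
    have h1 := h (u + w)
    have h2 := h (u - w)
    have par := parallelogram_law_with_norm ℂ u w
    have hs := hsymm w u
    rw [abs_le] at h1 h2 ⊢
    constructor <;> nlinarith [sq_nonneg (‖u‖ - ‖w‖), sq_abs ‖u‖]
  intro u w
  rcases eq_or_ne u 0 with rfl | hu
  · simp
  rcases eq_or_ne w 0 with rfl | hw
  · simp
  have hu' : 0 < ‖u‖ := norm_pos_iff.2 hu
  have hw' : 0 < ‖w‖ := norm_pos_iff.2 hw
  set t : ℝ := Real.sqrt (‖w‖ / ‖u‖) with ht
  have htpos : 0 < t := Real.sqrt_pos.2 (by positivity)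
  have hts : t ^ 2 = ‖w‖ / ‖u‖ := Real.sq_sqrt (by positivity)
  have heq : (⟪(t : ℂ) • u, T ((t⁻¹ : ℝ) • w)⟫_ℂ).re = (⟪u, T w⟫_ℂ).re := by
    rw [show ((t⁻¹ : ℝ) • w : H) = ((t⁻¹ : ℂ)) • w from by rw [← Complex.coe_smul]; norm_cast]
    rw [map_smul, inner_smul_left, inner_smul_right, Complex.conj_ofReal, ← mul_assoc,
      ← Complex.ofReal_inv, ← Complex.ofReal_mul, mul_inv_cancel₀ htpos.ne']
    simp
  have hk := key ((t : ℂ) • u) ((t⁻¹ : ℝ) • w)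
  rw [heq] at hk
  have hn1 : ‖(t : ℂ) • u‖ = t * ‖u‖ := by
    rw [norm_smul]; simp [abs_of_pos htpos]
  have hn2 : ‖(t⁻¹ : ℝ) • w‖ = t⁻¹ * ‖w‖ := by
    rw [norm_smul, Real.norm_eq_abs, abs_of_pos (inv_pos.2 htpos)]
  rw [hn1, hn2] at hk
  have harith : D / 2 * ((t * ‖u‖) ^ 2 + (t⁻¹ * ‖w‖) ^ 2) = D * ‖u‖ * ‖w‖ := by
    have h1 : (t * ‖u‖) ^ 2 = ‖w‖ / ‖u‖ * ‖u‖ ^ 2 := by rw [mul_pow, hts]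
    have h2 : (t⁻¹ * ‖w‖) ^ 2 = ‖u‖ / ‖w‖ * ‖w‖ ^ 2 := by
      rw [mul_pow, inv_pow, hts, inv_div]
    rw [h1, h2]
    field_simp
    ring
  linarith [hk, harith.ge, harith.le]


end Helpers

/-- If `|∑ j, v j ² ‖Λ j P_{W j} f‖² − ∑ j, v j ² ‖Γ j P_{V j} f‖²| ≤ D ‖f‖²`,
then the canonical dual frames satisfy
`|∑ j, v j ² ‖Λ j P_{W j} S_Λ⁻¹ f‖² − ∑ j, v j ² ‖Γ j P_{V j} S_Γ⁻¹ f‖²| ≤ (D/(A₁A₂)) ‖f‖²`. -/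
theorem dual_gFusion_quadratic_perturbation
    {H : Type*} [NormedAddCommGroup H] [InnerProductSpace ℂ H] [CompleteSpace H]
    {J : Type*} [Countable J]
    {G : J → Type*} [∀ j, NormedAddCommGroup (G j)] [∀ j, InnerProductSpace ℂ (G j)]
    [∀ j, CompleteSpace (G j)]
    (W V : J → Submodule ℂ H) [∀ j, CompleteSpace (W j)] [∀ j, CompleteSpace (V j)]
    (v : J → ℝ) (hv : ∀ j, 0 < v j)
    (Λ Γ : ∀ j, H →L[ℂ] G j)
    (A₁ B₁ A₂ B₂ : ℝ) (hA₁ : 0 < A₁) (hAB₁ : A₁ ≤ B₁) (hA₂ : 0 < A₂) (hAB₂ : A₂ ≤ B₂)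
    (hΛlow : ∀ f : H,
      A₁ * ‖f‖ ^ 2 ≤ ∑' j, (v j) ^ 2 * ‖Λ j (gProj (W j) f)‖ ^ 2)
    (hΛup : ∀ f : H,
      (∑' j, (v j) ^ 2 * ‖Λ j (gProj (W j) f)‖ ^ 2) ≤ B₁ * ‖f‖ ^ 2)
    (hΓlow : ∀ f : H,
      A₂ * ‖f‖ ^ 2 ≤ ∑' j, (v j) ^ 2 * ‖Γ j (gProj (V j) f)‖ ^ 2)
    (hΓup : ∀ f : H,
      (∑' j, (v j) ^ 2 * ‖Γ j (gProj (V j) f)‖ ^ 2) ≤ B₂ * ‖f‖ ^ 2)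
    (SΛ SΓ : H ≃L[ℂ] H)
    (hSΛ : ∀ f : H, HasSum
      (fun j => (v j) ^ 2 • gProj (W j) (adjoint (Λ j) (Λ j (gProj (W j) f)))) (SΛ f))
    (hSΓ : ∀ f : H, HasSum
      (fun j => (v j) ^ 2 • gProj (V j) (adjoint (Γ j) (Γ j (gProj (V j) f)))) (SΓ f))
    (D : ℝ) (hD : 0 < D)
    (hpert : ∀ f : H,
      |(∑' j, (v j) ^ 2 * ‖Λ j (gProj (W j) f)‖ ^ 2) -
          ∑' j, (v j) ^ 2 * ‖Γ j (gProj (V j) f)‖ ^ 2| ≤ D * ‖f‖ ^ 2) :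
    ∀ f : H,
      |(∑' j, (v j) ^ 2 * ‖Λ j (gProj (W j) (SΛ.symm f))‖ ^ 2) -
          ∑' j, (v j) ^ 2 * ‖Γ j (gProj (V j) (SΓ.symm f))‖ ^ 2| ≤
        (D / (A₁ * A₂)) * ‖f‖ ^ 2 := by

  have hΛre : ∀ g : H, (∑' j, (v j) ^ 2 * ‖Λ j (gProj (W j) g)‖ ^ 2) = (⟪g, SΛ g⟫_ℂ).re :=
    fun g => (hasSum_re_inner W v Λ SΛ hSΛ g).tsum_eq
  have hΓre : ∀ g : H, (∑' j, (v j) ^ 2 * ‖Γ j (gProj (V j) g)‖ ^ 2) = (⟪g, SΓ g⟫_ℂ).re :=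
    fun g => (hasSum_re_inner V v Γ SΓ hSΓ g).tsum_eq
  have hsymmΛ := inner_S_symm W v Λ SΛ hSΛ
  have hsymmΓ := inner_S_symm V v Γ SΓ hSΓ
  set T : H →L[ℂ] H := (SΛ : H →L[ℂ] H) - (SΓ : H →L[ℂ] H) with hT
  have hTapp : ∀ b : H, T b = SΛ b - SΓ b := fun b => rfl
  have hre_flip : ∀ a b : H, (⟪a, b⟫_ℂ).re = (⟪b, a⟫_ℂ).re := by
    intro a b; rw [← inner_conj_symm b a]; exact Complex.conj_re _
  have hTsymm : ∀ a b : H, (⟪a, T b⟫_ℂ).re = (⟪b, T a⟫_ℂ).re := by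
    intro a b
    rw [hTapp, hTapp, inner_sub_right, inner_sub_right, Complex.sub_re, Complex.sub_re,
      ← hsymmΛ a b, ← hsymmΓ a b, hre_flip (SΛ a) b, hre_flip (SΓ a) b]
  have hTbound : ∀ g : H, |(⟪g, T g⟫_ℂ).re| ≤ D * ‖g‖ ^ 2 := by
    intro g
    have : (⟪g, T g⟫_ℂ).re
        = (∑' j, (v j) ^ 2 * ‖Λ j (gProj (W j) g)‖ ^ 2)
          - ∑' j, (v j) ^ 2 * ‖Γ j (gProj (V j) g)‖ ^ 2 := by
      rw [hTapp, inner_sub_right, Complex.sub_re, hΛre, hΓre]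
    rw [this]; exact hpert g
  have hform := form_bound T hTsymm D hD.le hTbound
  have hsymmInv : ∀ a b : H, ⟪(SΛ.symm a : H), b⟫_ℂ = ⟪a, (SΛ.symm b : H)⟫_ℂ := by
    intro a b
    calc ⟪(SΛ.symm a : H), b⟫_ℂ = ⟪(SΛ.symm a : H), SΛ (SΛ.symm b)⟫_ℂ := by
          rw [SΛ.apply_symm_apply]
      _ = ⟪SΛ (SΛ.symm a), (SΛ.symm b : H)⟫_ℂ := (hsymmΛ _ _).symm
      _ = ⟪a, (SΛ.symm b : H)⟫_ℂ := by rw [SΛ.apply_symm_apply]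
  intro f
  set u : H := SΛ.symm f with hu
  set w : H := SΓ.symm f with hw
  have hSΛu : SΛ u = f := SΛ.apply_symm_apply f
  have hSΓw : SΓ w = f := SΓ.apply_symm_apply f
  -- norm bounds
  have hnorm : ∀ (A : ℝ), 0 < A → ∀ g : H, A * ‖g‖ ^ 2 ≤ (⟪g, f⟫_ℂ).re → ‖g‖ ≤ A⁻¹ * ‖f‖ := by
    intro A hA g hg
    have h1 : (⟪g, f⟫_ℂ).re ≤ ‖g‖ * ‖f‖ := by
      calc (⟪g, f⟫_ℂ).re ≤ |(⟪g, f⟫_ℂ).re| := le_abs_self _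
        _ ≤ ‖⟪g, f⟫_ℂ‖ := by exact Complex.abs_re_le_norm _
        _ ≤ ‖g‖ * ‖f‖ := norm_inner_le_norm g f
    rcases eq_or_lt_of_le (norm_nonneg g) with h0 | h0
    · rw [← h0]; positivity
    · have h2 : A * ‖g‖ ≤ ‖f‖ := by nlinarith
      calc ‖g‖ = A⁻¹ * (A * ‖g‖) := by field_simp
        _ ≤ A⁻¹ * ‖f‖ := by
            apply mul_le_mul le_rfl h2 (by positivity) (by positivity)
  have hubound : ‖u‖ ≤ A₁⁻¹ * ‖f‖ := by
    apply hnorm A₁ hA₁ u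
    have := hΛlow u
    rw [hΛre u, hSΛu] at this
    exact this
  have hwbound : ‖w‖ ≤ A₂⁻¹ * ‖f‖ := by
    apply hnorm A₂ hA₂ w
    have := hΓlow w
    rw [hΓre w, hSΓw] at this
    exact this
  -- key identity
  have hkey : (∑' j, (v j) ^ 2 * ‖Λ j (gProj (W j) u)‖ ^ 2)
      - ∑' j, (v j) ^ 2 * ‖Γ j (gProj (V j) w)‖ ^ 2 = -(⟪u, T w⟫_ℂ).re := by
    rw [hΛre u, hΓre w, hSΛu, hSΓw]
    have h1 : u - w = -(SΛ.symm (T w)) := by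
      have h2 : SΛ.symm (T w) = w - u := by
        rw [hTapp, hSΓw, map_sub, SΛ.symm_apply_apply, ← hu]
      rw [h2]; abel
    calc (⟪u, f⟫_ℂ).re - (⟪w, f⟫_ℂ).re = (⟪u - w, f⟫_ℂ).re := by
          rw [inner_sub_left, Complex.sub_re]
      _ = -(⟪(SΛ.symm (T w) : H), f⟫_ℂ).re := by rw [h1, inner_neg_left, Complex.neg_re]
      _ = -(⟪T w, u⟫_ℂ).re := by rw [hsymmInv, ← hu]
      _ = -(⟪u, T w⟫_ℂ).re := by rw [hre_flip]
  rw [hkey, abs_neg]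
  calc |(⟪u, T w⟫_ℂ).re| ≤ D * ‖u‖ * ‖w‖ := hform u w
    _ ≤ D * (A₁⁻¹ * ‖f‖) * (A₂⁻¹ * ‖f‖) := by
        apply mul_le_mul _ hwbound (norm_nonneg _) (by positivity)
        exact mul_le_mul le_rfl hubound (norm_nonneg _) hD.le
    _ = (D / (A₁ * A₂)) * ‖f‖ ^ 2 := by field_simp
end
end

section
/- Let Λ = {(W_j, Λ_j, v_j)}_{j∈J} and Γ = {(V_j, Γ_j, v_j)}_{j∈J} be g-fusion frames for H with bounds (A₁, B₁) and (A₂, B₂) respectively, with g-fusion frame operators S_Λ, S_Γ. If there exists D > 0 such that ‖S_Λ f − S_Γ f‖ = ‖∑_{j∈J} v_j² (P_{W_j} Λ_j* Λ_j P_{W_j} f − P_{V_j} Γ_j* Γ_j P_{V_j} f)‖ ≤ D‖f‖ for all f ∈ H, then the g-fusion frame operators of the canonical dual frames satisfy ‖S_Λ⁻¹ f − S_Γ⁻¹ f‖ ≤ (D/(A₁ A₂))·‖f‖ for all f ∈ H. -/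
noncomputable section
open ContinuousLinearMap

local notation "⟪" x ", " y "⟫_ℂ" => @inner ℂ _ _ x y

lemma gfusion_inv_bound
    {H : Type*} [NormedAddCommGroup H] [InnerProductSpace ℂ H] [CompleteSpace H]
    {J : Type*}
    {G : J → Type*} [∀ j, NormedAddCommGroup (G j)] [∀ j, InnerProductSpace ℂ (G j)]
    [∀ j, CompleteSpace (G j)]
    (W : J → Submodule ℂ H) [∀ j, CompleteSpace (W j)]
    (v : J → ℝ) (Λ : ∀ j, H →L[ℂ] G j)
    (A : ℝ) (hA : 0 < A)
    (hlow : ∀ f : H, A * ‖f‖ ^ 2 ≤ ∑' j, (v j) ^ 2 * ‖Λ j (gProj (W j) f)‖ ^ 2)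
    (S : H ≃L[ℂ] H)
    (hS : ∀ f : H, HasSum
      (fun j => (v j) ^ 2 • gProj (W j) (adjoint (Λ j) (Λ j (gProj (W j) f)))) (S f)) :
    ∀ g : H, ‖S.symm g‖ ≤ A⁻¹ * ‖g‖ := by
  have key : ∀ f : H, A * ‖f‖ ≤ ‖S f‖ := by
    intro f
    have hsum := (Complex.reCLM.hasSum (((innerSL ℂ f)).hasSum (hS f)))
    have heq : ∀ j, Complex.reCLM ((innerSL ℂ f)
        ((v j) ^ 2 • gProj (W j) (adjoint (Λ j) (Λ j (gProj (W j) f)))))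
        = (v j) ^ 2 * ‖Λ j (gProj (W j) f)‖ ^ 2 := by
      intro j
      have h1 : (⟪f, (v j) ^ 2 • gProj (W j) (adjoint (Λ j) (Λ j (gProj (W j) f)))⟫_ℂ)
          = ((v j) ^ 2 : ℂ) * ⟪gProj (W j) f, adjoint (Λ j) (Λ j (gProj (W j) f))⟫_ℂ := by
        rw [inner_smul_right_eq_smul]
        simp only [gProj, ContinuousLinearMap.comp_apply, Submodule.subtypeL_apply]
        simp only [← Submodule.starProjection_apply]
        rw [← Submodule.inner_starProjection_left_eq_right]
        norm_num [Complex.real_smul]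
      simp only [coe_innerSL_apply, innerSL_apply_apply, h1, adjoint_inner_right,
        inner_self_eq_norm_sq_to_K]
      simp [← Complex.ofReal_pow, ← Complex.ofReal_mul]
    rw [funext heq] at hsum
    have hts : A * ‖f‖ ^ 2 ≤ Complex.re ⟪f, S f⟫_ℂ := by
      have h2 := hsum.tsum_eq ▸ hlow f
      simpa using h2
    have hle : Complex.re ⟪f, S f⟫_ℂ ≤ ‖f‖ * ‖S f‖ := by
      calc Complex.re ⟪f, S f⟫_ℂ ≤ ‖⟪f, S f⟫_ℂ‖ := Complex.re_le_norm _
        _ ≤ ‖f‖ * ‖S f‖ := norm_inner_le_norm _ _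
    rcases eq_or_ne f 0 with rfl | hf
    · simp
    · have hfn : 0 < ‖f‖ := norm_pos_iff.mpr hf
      nlinarith [hts.trans hle]
  intro g
  have := key (S.symm g)
  simp only [S.apply_symm_apply] at this
  rw [le_inv_mul_iff₀ hA]
  linarith


/-- If `‖S_Λ f − S_Γ f‖ ≤ D ‖f‖` for all `f`, then the frame operators of the
canonical dual frames satisfy `‖S_Λ⁻¹ f − S_Γ⁻¹ f‖ ≤ (D/(A₁A₂)) ‖f‖` for all `f`. -/
theorem dual_frameOp_norm_perturbation
    {H : Type*} [NormedAddCommGroup H] [InnerProductSpace ℂ H] [CompleteSpace H]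
    {J : Type*} [Countable J]
    {G : J → Type*} [∀ j, NormedAddCommGroup (G j)] [∀ j, InnerProductSpace ℂ (G j)]
    [∀ j, CompleteSpace (G j)]
    (W V : J → Submodule ℂ H) [∀ j, CompleteSpace (W j)] [∀ j, CompleteSpace (V j)]
    (v : J → ℝ) (hv : ∀ j, 0 < v j)
    (Λ Γ : ∀ j, H →L[ℂ] G j)
    (A₁ B₁ A₂ B₂ : ℝ) (hA₁ : 0 < A₁) (hAB₁ : A₁ ≤ B₁) (hA₂ : 0 < A₂) (hAB₂ : A₂ ≤ B₂)
    (hΛlow : ∀ f : H,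
      A₁ * ‖f‖ ^ 2 ≤ ∑' j, (v j) ^ 2 * ‖Λ j (gProj (W j) f)‖ ^ 2)
    (hΛup : ∀ f : H,
      (∑' j, (v j) ^ 2 * ‖Λ j (gProj (W j) f)‖ ^ 2) ≤ B₁ * ‖f‖ ^ 2)
    (hΓlow : ∀ f : H,
      A₂ * ‖f‖ ^ 2 ≤ ∑' j, (v j) ^ 2 * ‖Γ j (gProj (V j) f)‖ ^ 2)
    (hΓup : ∀ f : H,
      (∑' j, (v j) ^ 2 * ‖Γ j (gProj (V j) f)‖ ^ 2) ≤ B₂ * ‖f‖ ^ 2)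
    (SΛ SΓ : H ≃L[ℂ] H)
    (hSΛ : ∀ f : H, HasSum
      (fun j => (v j) ^ 2 • gProj (W j) (adjoint (Λ j) (Λ j (gProj (W j) f)))) (SΛ f))
    (hSΓ : ∀ f : H, HasSum
      (fun j => (v j) ^ 2 • gProj (V j) (adjoint (Γ j) (Γ j (gProj (V j) f)))) (SΓ f))
    (D : ℝ) (hD : 0 < D)
    (hpert : ∀ f : H, ‖SΛ f - SΓ f‖ ≤ D * ‖f‖) :
    ∀ f : H, ‖SΛ.symm f - SΓ.symm f‖ ≤ (D / (A₁ * A₂)) * ‖f‖ := by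
  intro f
  have hΛinv := gfusion_inv_bound W v Λ A₁ hA₁ hΛlow SΛ hSΛ
  have hΓinv := gfusion_inv_bound V v Γ A₂ hA₂ hΓlow SΓ hSΓ
  set w := SΓ.symm f with hw
  have hrw : SΛ.symm f - SΓ.symm f = SΛ.symm (SΓ w - SΛ w) := by
    rw [map_sub, hw, SΓ.apply_symm_apply, SΛ.symm_apply_apply]
  rw [hrw]
  calc ‖SΛ.symm (SΓ w - SΛ w)‖ ≤ A₁⁻¹ * ‖SΓ w - SΛ w‖ := hΛinv _
    _ = A₁⁻¹ * ‖SΛ w - SΓ w‖ := by rw [norm_sub_rev]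
    _ ≤ A₁⁻¹ * (D * ‖w‖) := by
        have := hpert w
        have h0 : (0:ℝ) ≤ A₁⁻¹ := le_of_lt (inv_pos.mpr hA₁)
        exact mul_le_mul_of_nonneg_left this h0
    _ ≤ A₁⁻¹ * (D * (A₂⁻¹ * ‖f‖)) := by
        have := hΓinv f
        have h0 : (0:ℝ) ≤ A₁⁻¹ * D := by positivity
        calc A₁⁻¹ * (D * ‖w‖) = (A₁⁻¹ * D) * ‖w‖ := by ring
          _ ≤ (A₁⁻¹ * D) * (A₂⁻¹ * ‖f‖) := mul_le_mul_of_nonneg_left this h0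
          _ = A₁⁻¹ * (D * (A₂⁻¹ * ‖f‖)) := by ring
    _ = (D / (A₁ * A₂)) * ‖f‖ := by field_simp
end
end
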